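/- arXiv:1506.05090 — 2 statements merged into one kernel-verified Lean document; each statement's English description precedes it below -/
import Mathlib

section
/- Let Y be a real Hilbert space and L : X ⊆ Y → Y a self-adjoint operator on a dense subspace X with spectrum σ(L) disjoint from [-c, c] for some c > 0. If N : Y → Y is Lipschitz with constant n < c, then the map F = L - N : X → Y is a bijection from X onto Y. -/
/-!
By Hellinger–Toeplitz, `A = L⁻¹` is a bounded self-adjoint operator. For `0 < |μ| ≤ c` we have
`μ⁻¹ - A = μ⁻¹ (L - μ) L⁻¹`, so the spectrum of `A` lies in `(-1/c, 1/c)`; since the norm of a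
self-adjoint operator is its spectral radius, `‖A‖ ≤ 1/c`. Now `L x - N x = y` means that `x` is a
fixed point of `z ↦ A (N z + y)`, a contraction with constant `n / c` on `Y` whose fixed points
lie in the range `X` of `A`, so Banach's fixed point theorem gives a unique solution.
-/

open scoped RealInnerProductSpace NNReal

open Function Set

theorem norm_le_of_forall_mem_spectrum {𝕜 Y : Type*} [RCLike 𝕜] [NormedAddCommGroup Y]
    [InnerProductSpace 𝕜 Y] [CompleteSpace Y] {A : Y →L[𝕜] Y} (hA : IsSelfAdjoint A)
    {r : ℝ} (hr : 0 ≤ r) (h : ∀ k ∈ spectrum 𝕜 A, ‖k‖ ≤ r) : ‖A‖ ≤ r := by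
  have hρ : spectralRadius 𝕜 A ≤ ENNReal.ofReal r :=
    iSup₂_le fun k hk => by
      rw [← enorm_eq_nnnorm, ← ofReal_norm]
      exact ENNReal.ofReal_le_ofReal (h k hk)
  rwa [A.spectralRadius_eq_nnnorm hA, ← enorm_eq_nnnorm, ← ofReal_norm,
    ENNReal.ofReal_le_ofReal_iff hr] at hρ

theorem contractingWith_comp_add {𝕜 E : Type*} [NontriviallyNormedField 𝕜]
    [NormedAddCommGroup E] [NormedSpace 𝕜 E] (A : E →L[𝕜] E) {N : E → E} {n : ℝ≥0}
    (hN : LipschitzWith n N) (hK : ‖A‖₊ * n < 1) (y : E) :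
    ContractingWith (‖A‖₊ * n) fun z => A (N z + y) := by
  have hNy := hN.add (LipschitzWith.const y)
  rw [add_zero] at hNy
  exact ⟨hK, A.lipschitz.comp hNy⟩

theorem isSymmetric_subtype_comp_ofBijective_symm {𝕜 Y : Type*} [RCLike 𝕜] [NormedAddCommGroup Y]
    [InnerProductSpace 𝕜 Y] {X : Submodule 𝕜 Y} (T : X →ₗ[𝕜] Y)
    (hT : ∀ x y : X, inner 𝕜 (T x) (y : Y) = inner 𝕜 (x : Y) (T y)) (hbij : Bijective T) :
    (X.subtype ∘ₗ (LinearEquiv.ofBijective T hbij).symm.toLinearMap).IsSymmetric := by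
  intro y z
  set e := LinearEquiv.ofBijective T hbij
  have hTe (w : Y) : T (e.symm w) = w := e.apply_symm_apply w
  calc inner 𝕜 (e.symm y : Y) z = inner 𝕜 (e.symm y : Y) (T (e.symm z)) := by rw [hTe]
    _ = inner 𝕜 (T (e.symm y)) (e.symm z : Y) := (hT _ _).symm
    _ = inner 𝕜 y (e.symm z : Y) := by rw [hTe]

section Inverse

variable {𝕜 Y : Type*} [RCLike 𝕜] [NormedAddCommGroup Y] [InnerProductSpace 𝕜 Y]
  [CompleteSpace Y] {X : Submodule 𝕜 Y} (T : X →ₗ[𝕜] Y)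
  (hT : ∀ x y : X, inner 𝕜 (T x) (y : Y) = inner 𝕜 (x : Y) (T y)) (hbij : Bijective T)

noncomputable def inverseCLM : Y →L[𝕜] Y :=
  ⟨_, (isSymmetric_subtype_comp_ofBijective_symm T hT hbij).continuous⟩

theorem inverseCLM_apply (y : Y) :
    inverseCLM T hT hbij y = ((LinearEquiv.ofBijective T hbij).symm y : Y) := rfl

theorem isSelfAdjoint_inverseCLM : IsSelfAdjoint (inverseCLM T hT hbij) :=
  (isSymmetric_subtype_comp_ofBijective_symm T hT hbij).isSelfAdjoint

theorem inverseCLM_mem (y : Y) : inverseCLM T hT hbij y ∈ X :=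
  ((LinearEquiv.ofBijective T hbij).symm y).2

theorem inverseCLM_eq_iff {y : Y} {x : X} : inverseCLM T hT hbij y = x ↔ y = T x := by
  rw [inverseCLM_apply, Subtype.coe_inj, LinearEquiv.symm_apply_eq]
  rfl

theorem inv_mem_resolventSet_inverseCLM {μ : 𝕜} (hμ : μ ≠ 0)
    (h : Bijective fun x : X => T x - μ • (x : Y)) :
    μ⁻¹ ∈ resolventSet 𝕜 (inverseCLM T hT hbij) := by
  rw [spectrum.mem_resolventSet_iff, ContinuousLinearMap.isUnit_iff_bijective]
  convert (MulAction.bijective₀ (inv_ne_zero hμ)).comp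
    (h.comp (LinearEquiv.ofBijective T hbij).symm.bijective) using 1
  ext y
  simp [smul_sub, inv_smul_smul₀ hμ, inverseCLM_apply]

theorem bijective_sub_of_contractingWith {N : Y → Y} {K : ℝ≥0}
    (hK : ∀ y, ContractingWith K fun z => inverseCLM T hT hbij (N z + y)) :
    Bijective fun x : X => T x - N x := by
  refine bijective_iff_existsUnique _ |>.2 fun y => ?_
  have hsol (x : X) : inverseCLM T hT hbij (N x + y) = x ↔ T x - N x = y := by
    rw [inverseCLM_eq_iff, sub_eq_iff_eq_add', eq_comm]
  set z := (hK y).fixedPoint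
  have hz : inverseCLM T hT hbij (N z + y) = z := (hK y).fixedPoint_isFixedPt
  refine ⟨⟨z, hz ▸ inverseCLM_mem T hT hbij _⟩, (hsol _).1 hz, fun x hx => ?_⟩
  exact Subtype.ext ((hK y).fixedPoint_unique ((hsol x).2 hx))

end Inverse

theorem norm_inverseCLM_le {Y : Type*} [NormedAddCommGroup Y] [InnerProductSpace ℝ Y]
    [CompleteSpace Y] {X : Submodule ℝ Y} (T : X →ₗ[ℝ] Y)
    (hT : ∀ x y : X, ⟪T x, (y : Y)⟫ = ⟪(x : Y), T y⟫) (hbij : Bijective T) {c : ℝ} (hc : 0 < c)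
    (hres : ∀ μ ∈ Icc (-c) c, μ ≠ 0 → Bijective fun x : X => T x - μ • (x : Y)) :
    ‖inverseCLM T hT hbij‖ ≤ c⁻¹ := by
  refine norm_le_of_forall_mem_spectrum (isSelfAdjoint_inverseCLM T hT hbij)
    (inv_nonneg.2 hc.le) fun k hk => ?_
  by_contra! hlt
  rw [Real.norm_eq_abs] at hlt
  have hk0 : k ≠ 0 := abs_pos.1 ((inv_pos.2 hc).trans hlt)
  have hμ : k⁻¹ ∈ Icc (-c) c := by
    rw [mem_Icc, ← abs_le, abs_inv]
    exact inv_le_of_inv_le₀ hc hlt.le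
  have := inv_mem_resolventSet_inverseCLM T hT hbij (inv_ne_zero hk0)
    (hres _ hμ (inv_ne_zero hk0))
  rw [inv_inv] at this
  exact hk this

theorem stmt0_general
    {Y : Type*} [NormedAddCommGroup Y] [InnerProductSpace ℝ Y] [CompleteSpace Y]
    (X : Submodule ℝ Y)
    (L : X →ₗ[ℝ] Y)
    (hsa : ∀ x y : X, ⟪L x, (y : Y)⟫ = ⟪(x : Y), L y⟫)
    (c : ℝ) (hc : 0 < c)
    -- `σ(L) ∩ [-c,c] = ∅` : every `μ ∈ [-c,c]` is in the resolvent set of `L`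
    (hspec : ∀ μ ∈ Set.Icc (-c) c,
      Function.Bijective (fun x : X => L x - μ • (x : Y)))
    (n : ℝ≥0) (N : Y → Y) (hN : LipschitzWith n N) (hn : (n : ℝ) < c) :
    Function.Bijective (fun x : X => L x - N (x : Y)) := by
  have hL : Bijective L := by simpa using hspec 0 ⟨by linarith, hc.le⟩
  set A := inverseCLM L hsa hL
  have hA : ‖A‖ ≤ c⁻¹ := norm_inverseCLM_le L hsa hL hc fun μ hμ _ => hspec μ hμ
  have hK : ‖A‖₊ * n < 1 := by
    rw [← NNReal.coe_lt_coe, NNReal.coe_mul, coe_nnnorm, NNReal.coe_one]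
    calc ‖A‖ * n ≤ c⁻¹ * n := by gcongr
      _ < c⁻¹ * c := by gcongr
      _ = 1 := inv_mul_cancel₀ hc.ne'
  exact bijective_sub_of_contractingWith L hsa hL fun y => contractingWith_comp_add A hN hK y

/-- Dolph–Hammerstein: if the spectrum of the self-adjoint operator `L` (densely
defined, with domain `X`) is disjoint from `[-c, c]` and `N` is Lipschitz with
constant `n < c`, then `F = L - N : X → Y` is a bijection onto `Y`. -/
theorem stmt0
    {Y : Type*} [NormedAddCommGroup Y] [InnerProductSpace ℝ Y] [CompleteSpace Y]
    (X : Submodule ℝ Y) (hdense : Dense (X : Set Y))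
    (L : X →ₗ[ℝ] Y)
    (hsa : ∀ x y : X, ⟪L x, (y : Y)⟫ = ⟪(x : Y), L y⟫)
    (c : ℝ) (hc : 0 < c)
    -- `σ(L) ∩ [-c,c] = ∅` : every `μ ∈ [-c,c]` is in the resolvent set of `L`
    (hspec : ∀ μ ∈ Set.Icc (-c) c,
      Function.Bijective (fun x : X => L x - μ • (x : Y)))
    (n : ℝ≥0) (N : Y → Y) (hN : LipschitzWith n N) (hn : (n : ℝ) < c) :
    Function.Bijective (fun x : X => L x - N (x : Y)) :=
  stmt0_general X L hsa c hc hspec n N hN hn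
end

section
/- Let h : ℝ → ℝ be C¹ with h(t) → -∞ as t → ±∞, and suppose every critical point of h is an isolated local maximum. Then h has exactly one critical point t₀, h is strictly increasing on (-∞, t₀] and strictly decreasing on [t₀, ∞), and every value s < h(t₀) has exactly two preimages, s = h(t₀) has exactly one, and s > h(t₀) has none. -/
open Filter Set

/-- If `h` is constant on an open interval, its derivative vanishes there. -/
lemma deriv_zero_of_constOn {h : ℝ → ℝ} {u v c : ℝ}
    (hc : ∀ x ∈ Ioo u v, h x = c) : ∀ s ∈ Ioo u v, deriv h s = 0 := by
  intro s hs
  have hev : h =ᶠ[nhds s] (fun _ => c) :=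
    Filter.eventually_of_mem (Ioo_mem_nhds hs.1 hs.2) hc
  rw [hev.deriv_eq, deriv_const]

/-- If the derivative vanishes on an interval to the right of a critical point,
we contradict isolation. -/
lemma no_right_flat {h : ℝ → ℝ}
    (hcrit : ∀ t : ℝ, deriv h t = 0 →
      IsLocalMax h t ∧ ∃ δ > 0, ∀ s ∈ Ioo (t - δ) (t + δ), s ≠ t → deriv h s ≠ 0)
    {p ε : ℝ} (hε : 0 < ε) (hp : deriv h p = 0)
    (hflat : ∀ x ∈ Ioo p (p + ε), deriv h x = 0) : False := by
  obtain ⟨-, δ, hδ, hiso⟩ := hcrit p hp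
  set s := p + min ε δ / 2 with hs
  have hmin : 0 < min ε δ := lt_min hε hδ
  have hεle : min ε δ ≤ ε := min_le_left _ _
  have hδle : min ε δ ≤ δ := min_le_right _ _
  have h1 : p < s := by rw [hs]; linarith
  have h2 : s < p + ε := by rw [hs]; linarith
  have h3 : s < p + δ := by rw [hs]; linarith
  have h4 : p - δ < s := by linarith
  exact hiso s ⟨h4, h3⟩ (ne_of_gt h1) (hflat s ⟨h1, h2⟩)

lemma no_left_flat {h : ℝ → ℝ}
    (hcrit : ∀ t : ℝ, deriv h t = 0 →
      IsLocalMax h t ∧ ∃ δ > 0, ∀ s ∈ Ioo (t - δ) (t + δ), s ≠ t → deriv h s ≠ 0)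
    {p ε : ℝ} (hε : 0 < ε) (hp : deriv h p = 0)
    (hflat : ∀ x ∈ Ioo (p - ε) p, deriv h x = 0) : False := by
  obtain ⟨-, δ, hδ, hiso⟩ := hcrit p hp
  set s := p - min ε δ / 2 with hs
  have hmin : 0 < min ε δ := lt_min hε hδ
  have hεle : min ε δ ≤ ε := min_le_left _ _
  have hδle : min ε δ ≤ δ := min_le_right _ _
  have h1 : s < p := by rw [hs]; linarith
  have h2 : p - ε < s := by rw [hs]; linarith
  have h3 : p - δ < s := by rw [hs]; linarith
  have h4 : s < p + δ := by linarith
  exact hiso s ⟨h3, h4⟩ (ne_of_lt h1) (hflat s ⟨h2, h1⟩)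

/-- One-dimensional fold lemma: if `h : ℝ → ℝ` is C¹ with `h(t) → -∞` as
`t → ±∞` and every critical point is an isolated local maximum, then `h` has a
unique critical point `t₀`, is strictly increasing on `(-∞, t₀]` and strictly
decreasing on `[t₀, ∞)`, and every value `s < h t₀` has exactly two preimages,
`s = h t₀` exactly one, and `s > h t₀` none. -/
theorem stmt9
    (h : ℝ → ℝ) (hC1 : ContDiff ℝ 1 h)
    (htop : Tendsto h atTop atBot) (hbot : Tendsto h atBot atBot)
    (hcrit : ∀ t : ℝ, deriv h t = 0 →
      IsLocalMax h t ∧ ∃ δ > 0, ∀ s ∈ Ioo (t - δ) (t + δ), s ≠ t → deriv h s ≠ 0) :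
    ∃ t₀ : ℝ, deriv h t₀ = 0 ∧ (∀ t : ℝ, deriv h t = 0 → t = t₀) ∧
      StrictMonoOn h (Iic t₀) ∧ StrictAntiOn h (Ici t₀) ∧
      (∀ s : ℝ, s < h t₀ → ({t : ℝ | h t = s}).ncard = 2) ∧
      ({t : ℝ | h t = h t₀}).ncard = 1 ∧
      (∀ s : ℝ, h t₀ < s → {t : ℝ | h t = s} = ∅) := by
  have hcont : Continuous h := hC1.continuous
  have hdiff : Differentiable ℝ h := hC1.differentiable one_ne_zero
  have hdcont : Continuous (deriv h) := hC1.continuous_deriv le_rfl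
  -- global maximum
  have hco : Tendsto h (cocompact ℝ) atBot := by
    rw [cocompact_eq_atBot_atTop]
    exact Filter.Tendsto.sup hbot htop
  obtain ⟨t₀, ht₀⟩ := hcont.exists_forall_ge hco
  have hmax : IsLocalMax h t₀ := Filter.Eventually.of_forall fun x => ht₀ x
  have hd0 : deriv h t₀ = 0 := hmax.deriv_eq_zero
  -- uniqueness of the critical point
  have huniq : ∀ t : ℝ, deriv h t = 0 → t = t₀ := by
    intro t ht
    by_contra hne
    obtain ⟨a, b, hab, hda, hdb⟩ : ∃ a b : ℝ, a < b ∧ deriv h a = 0 ∧ deriv h b = 0 := by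
      rcases lt_or_gt_of_ne hne with hlt | hlt
      · exact ⟨t, t₀, hlt, ht, hd0⟩
      · exact ⟨t₀, t, hlt, hd0, ht⟩
    obtain ⟨c, hc, hcmin⟩ :=
      (isCompact_Icc (a := a) (b := b)).exists_isMinOn (nonempty_Icc.2 hab.le)
        hcont.continuousOn
    rcases eq_or_lt_of_le hc.1 with rfl | hac
    · -- min at left endpoint: h constant just right of a
      obtain ⟨hamax, -⟩ := hcrit a hda
      obtain ⟨ε, hε, hub⟩ := Metric.eventually_nhds_iff_ball.1 hamax
      have hconst : ∀ x ∈ Ioo a (min (a + ε) b), h x = h a := by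
        intro x hx
        have hxb : x ∈ Icc a b := ⟨hx.1.le, (hx.2.trans_le (min_le_right _ _)).le⟩
        have hle : h x ≤ h a := by
          apply hub
          rw [Real.ball_eq_Ioo]
          exact ⟨by linarith [hx.1], hx.2.trans_le (min_le_left _ _)⟩
        exact le_antisymm hle (hcmin hxb)
      have hlt : a < min (a + ε) b := lt_min (by linarith) hab
      have heq : min (a + ε) b = a + (min (a + ε) b - a) := by ring
      refine no_right_flat hcrit (ε := min (a + ε) b - a) (by linarith) hda ?_
      intro x hx
      exact deriv_zero_of_constOn hconst x (by rw [heq]; exact hx)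
    rcases eq_or_lt_of_le hc.2 with rfl | hcb
    · -- min at right endpoint
      obtain ⟨hbmax, -⟩ := hcrit c hdb
      obtain ⟨ε, hε, hub⟩ := Metric.eventually_nhds_iff_ball.1 hbmax
      have hconst : ∀ x ∈ Ioo (max (c - ε) a) c, h x = h c := by
        intro x hx
        have hxb : x ∈ Icc a c := ⟨(le_max_right _ _).trans hx.1.le, hx.2.le⟩
        have hle : h x ≤ h c := by
          apply hub
          rw [Real.ball_eq_Ioo]
          refine ⟨lt_of_le_of_lt (le_max_left _ _) hx.1, by linarith [hx.2]⟩
        exact le_antisymm hle (hcmin hxb)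
      have hlt : max (c - ε) a < c := max_lt (by linarith) hac
      have heq : max (c - ε) a = c - (c - max (c - ε) a) := by ring
      refine no_left_flat hcrit (ε := c - max (c - ε) a) (by linarith) hdb ?_
      intro x hx
      exact deriv_zero_of_constOn hconst x (by rw [heq]; exact hx)
    · -- min interior: local min + local max ⇒ locally constant
      have hlmin : IsLocalMin h c := hcmin.isLocalMin (Icc_mem_nhds hac hcb)
      have hdc : deriv h c = 0 := hlmin.deriv_eq_zero
      obtain ⟨hlmax, -⟩ := hcrit c hdc
      have hev : ∀ᶠ x in nhds c, h x = h c :=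
        hlmax.mp (hlmin.mono fun x h1 h2 => le_antisymm h2 h1)
      obtain ⟨ε, hε, hub⟩ := Metric.eventually_nhds_iff_ball.1 hev
      have hconst : ∀ x ∈ Ioo c (c + ε), h x = h c := by
        intro x hx
        exact hub x (by rw [Real.ball_eq_Ioo]; exact ⟨by linarith [hx.1], hx.2⟩)
      exact no_right_flat hcrit hε hdc (deriv_zero_of_constOn hconst)
  -- derivative positive left of t₀
  have hpos : ∀ a < t₀, 0 < deriv h a := by
    intro a ha
    obtain ⟨b, hb, hbv⟩ : ∃ b, b < min a t₀ ∧ h b < h t₀ - 1 := by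
      have h1 : ∀ᶠ x in atBot, h x < h t₀ - 1 := hbot.eventually (eventually_lt_atBot _)
      have h2 : ∀ᶠ x in atBot, x < min a t₀ := eventually_lt_atBot _
      obtain ⟨b, hb1, hb2⟩ := (h2.and h1).exists
      exact ⟨b, hb1, hb2⟩
    have hbt : b < t₀ := hb.trans_le (min_le_right _ _)
    obtain ⟨c, hcIoo, hcd⟩ := exists_deriv_eq_slope h hbt hcont.continuousOn
      hdiff.differentiableOn
    have hcpos : 0 < deriv h c := by
      rw [hcd]
      apply div_pos <;> linarith
    rcases eq_or_ne a c with rfl | hac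
    · exact hcpos
    rcases lt_or_ge (deriv h a) 0 with hneg | hge
    · exfalso
      have h0m : (0 : ℝ) ∈ uIcc (deriv h a) (deriv h c) := by
        rw [mem_uIcc]; left; exact ⟨hneg.le, hcpos.le⟩
      obtain ⟨x, hx, hx0⟩ := intermediate_value_uIcc hdcont.continuousOn h0m
      have hxt : x = t₀ := huniq x hx0
      have hxlt : x < t₀ := by
        rcases mem_uIcc.1 hx with ⟨-, h2⟩ | ⟨-, h2⟩
        · exact h2.trans_lt hcIoo.2
        · exact h2.trans_lt ha
      exact absurd hxt (ne_of_lt hxlt)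
    · rcases hge.lt_or_eq with hlt | heq
      · exact hlt
      · exact absurd (huniq a heq.symm) (ne_of_lt ha)
  -- derivative negative right of t₀
  have hnegd : ∀ a, t₀ < a → deriv h a < 0 := by
    intro a ha
    obtain ⟨b, hb, hbv⟩ : ∃ b, max a t₀ < b ∧ h b < h t₀ - 1 := by
      have h1 : ∀ᶠ x in atTop, h x < h t₀ - 1 := htop.eventually (eventually_lt_atBot _)
      have h2 : ∀ᶠ x in atTop, max a t₀ < x := eventually_gt_atTop _
      obtain ⟨b, hb1, hb2⟩ := (h2.and h1).exists
      exact ⟨b, hb1, hb2⟩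
    have hbt : t₀ < b := (le_max_right _ _).trans_lt hb
    obtain ⟨c, hcIoo, hcd⟩ := exists_deriv_eq_slope h hbt hcont.continuousOn
      hdiff.differentiableOn
    have hcneg : deriv h c < 0 := by
      rw [hcd]
      apply div_neg_of_neg_of_pos <;> linarith
    rcases eq_or_ne a c with rfl | hac
    · exact hcneg
    rcases lt_or_ge 0 (deriv h a) with hpos' | hle
    · exfalso
      have h0m : (0 : ℝ) ∈ uIcc (deriv h a) (deriv h c) := by
        rw [mem_uIcc]; right; exact ⟨hcneg.le, hpos'.le⟩
      obtain ⟨x, hx, hx0⟩ := intermediate_value_uIcc hdcont.continuousOn h0m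
      have hxt : x = t₀ := huniq x hx0
      have hxgt : t₀ < x := by
        rcases mem_uIcc.1 hx with ⟨h1, -⟩ | ⟨h1, -⟩
        · exact ha.trans_le h1
        · exact hcIoo.1.trans_le h1
      exact absurd hxt (ne_of_gt hxgt)
    · rcases hle.lt_or_eq with hlt | heq
      · exact hlt
      · exact absurd (huniq a heq) (ne_of_gt ha)
  have hmono : StrictMonoOn h (Iic t₀) := by
    apply strictMonoOn_of_deriv_pos (convex_Iic t₀) hcont.continuousOn
    intro x hx
    rw [interior_Iic] at hx
    exact hpos x hx
  have hanti : StrictAntiOn h (Ici t₀) := by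
    apply strictAntiOn_of_deriv_neg (convex_Ici t₀) hcont.continuousOn
    intro x hx
    rw [interior_Ici] at hx
    exact hnegd x hx
  refine ⟨t₀, hd0, huniq, hmono, hanti, ?_, ?_, ?_⟩
  · -- two preimages
    intro s hs
    obtain ⟨b, hb, hbv⟩ : ∃ b, b < t₀ ∧ h b < s := by
      have h1 : ∀ᶠ x in atBot, h x < s := hbot.eventually (eventually_lt_atBot _)
      have h2 : ∀ᶠ x in atBot, x < t₀ := eventually_lt_atBot _
      obtain ⟨b, hb1, hb2⟩ := (h2.and h1).exists
      exact ⟨b, hb1, hb2⟩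
    obtain ⟨B, hB, hBv⟩ : ∃ B, t₀ < B ∧ h B < s := by
      have h1 : ∀ᶠ x in atTop, h x < s := htop.eventually (eventually_lt_atBot _)
      have h2 : ∀ᶠ x in atTop, t₀ < x := eventually_gt_atTop _
      obtain ⟨B, hB1, hB2⟩ := (h2.and h1).exists
      exact ⟨B, hB1, hB2⟩
    have hsm : s ∈ uIcc (h b) (h t₀) := by rw [mem_uIcc]; left; exact ⟨hbv.le, hs.le⟩
    obtain ⟨t₁, ht₁m, ht₁⟩ := intermediate_value_uIcc hcont.continuousOn hsm
    have hsM : s ∈ uIcc (h t₀) (h B) := by rw [mem_uIcc]; right; exact ⟨hBv.le, hs.le⟩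
    obtain ⟨t₂, ht₂m, ht₂⟩ := intermediate_value_uIcc hcont.continuousOn hsM
    rw [uIcc_of_le hb.le] at ht₁m
    rw [uIcc_of_le hB.le] at ht₂m
    have ht₁lt : t₁ < t₀ := ht₁m.2.lt_of_ne (fun he => by rw [he] at ht₁; linarith)
    have ht₂gt : t₀ < t₂ := ht₂m.1.lt_of_ne
      (fun he => by rw [← he] at ht₂; exact absurd ht₂.symm (ne_of_lt hs))
    have hset : {t : ℝ | h t = s} = {t₁, t₂} := by
      ext x
      simp only [mem_setOf_eq, mem_insert_iff, mem_singleton_iff]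
      constructor
      · intro hx
        rcases le_or_gt x t₀ with hxle | hxgt
        · left
          exact hmono.injOn (mem_Iic.2 hxle) (mem_Iic.2 ht₁lt.le) (by rw [hx, ht₁])
        · right
          exact hanti.injOn (mem_Ici.2 hxgt.le) (mem_Ici.2 ht₂gt.le) (by rw [hx, ht₂])
      · rintro (rfl | rfl)
        · exact ht₁
        · exact ht₂
    rw [hset]
    exact Set.ncard_pair (by linarith)
  · -- one preimage at max value
    have hset : {t : ℝ | h t = h t₀} = {t₀} := by
      ext x
      simp only [mem_setOf_eq, mem_singleton_iff]
      constructor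
      · intro hx
        by_contra hne
        rcases lt_or_gt_of_ne hne with hlt | hgt
        · exact absurd hx (ne_of_lt (hmono (mem_Iic.2 hlt.le) (mem_Iic.2 le_rfl) hlt))
        · exact absurd hx (ne_of_lt (hanti (mem_Ici.2 le_rfl) (mem_Ici.2 hgt.le) hgt))
      · rintro rfl; rfl
    rw [hset, Set.ncard_singleton]
  · -- none above max
    intro s hs
    ext x
    simp only [mem_setOf_eq, mem_empty_iff_false, iff_false]
    intro hx
    have := ht₀ x
    linarith
end
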